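/- Consider the Iwasawa manifold M = Γ\H_ℂ with the left-invariant (1,0)-forms ω₁ = dz₁, ω₂ = dz₂, ω₃ = dz₃ − z₂dz₁ satisfying dω₁ = dω₂ = 0, dω₃ = ω₁∧ω₂, and the balanced Hermitian form ω = (i/2)(ω₁∧ω̄₁ + ω₂∧ω̄₂ + ω₃∧ω̄₃). Then the torsion bivector field σ_ω of ω identically vanishes. -/

import Mathlib

/-!
STATEMENT 13: On the Iwasawa manifold (computed on the universal cover `ℂ³`,
coordinates `(z₁,z₂,z₃)`), with the left-invariant frame `ω₁ = dz₁`,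
`ω₂ = dz₂`, `ω₃ = dz₃ − z₂ dz₁` and the balanced Hermitian form
`ω = (i/2)(ω₁∧ω̄₁ + ω₂∧ω̄₂ + ω₃∧ω̄₃)`, the torsion bivector field
`(σ_ω)_{ī j̄} = i Σ_k g⁻¹dz̄_k( ∂ω(g⁻¹dz̄_i, g⁻¹dz̄_j, ∂̄_k) )`
vanishes identically. Here `∂ω = (i/2) ω₁∧ω₂∧ω̄₃` and the dual vector fields
are `g⁻¹dz̄₁ = 2(∂₁ + z₂∂₃)`, `g⁻¹dz̄₂ = 2∂₂`,
`g⁻¹dz̄₃ = 2(z̄₂∂₂ + (1+|z₂|²)∂₃)`.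
-/

open Complex

abbrev C3 := ℂ × ℂ × ℂ

/-- Wirtinger derivative `∂/∂z₁` on `ℂ³`. -/
noncomputable def pd1 (f : C3 → ℂ) (z : C3) : ℂ :=
  (1 / 2) * (fderiv ℝ f z (1, 0, 0) - Complex.I * fderiv ℝ f z (Complex.I, 0, 0))

/-- Wirtinger derivative `∂/∂z₂` on `ℂ³`. -/
noncomputable def pd2 (f : C3 → ℂ) (z : C3) : ℂ :=
  (1 / 2) * (fderiv ℝ f z (0, 1, 0) - Complex.I * fderiv ℝ f z (0, Complex.I, 0))

/-- Wirtinger derivative `∂/∂z₃` on `ℂ³`. -/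
noncomputable def pd3 (f : C3 → ℂ) (z : C3) : ℂ :=
  (1 / 2) * (fderiv ℝ f z (0, 0, 1) - Complex.I * fderiv ℝ f z (0, 0, Complex.I))

/-- The vector fields `g⁻¹dz̄_k`, acting as derivations on functions:
`g⁻¹dz̄₁ = 2(∂₁ + z₂∂₃)`, `g⁻¹dz̄₂ = 2∂₂`, `g⁻¹dz̄₃ = 2(z̄₂∂₂ + (1+|z₂|²)∂₃)`. -/
noncomputable def Vact : Fin 3 → (C3 → ℂ) → C3 → ℂ
  | 0 => fun f z => 2 * (pd1 f z + z.2.1 * pd3 f z)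
  | 1 => fun f z => 2 * pd2 f z
  | 2 => fun f z => 2 * ((starRingEnd ℂ) z.2.1 * pd2 f z
      + (1 + (Complex.normSq z.2.1 : ℂ)) * pd3 f z)

/-- `ω₁ = dz₁` evaluated on `g⁻¹dz̄_i`. -/
noncomputable def w1 : Fin 3 → C3 → ℂ := ![fun _ => 2, fun _ => 0, fun _ => 0]

/-- `ω₂ = dz₂` evaluated on `g⁻¹dz̄_i`. -/
noncomputable def w2 : Fin 3 → C3 → ℂ :=
  ![fun _ => 0, fun _ => 2, fun z => 2 * (starRingEnd ℂ) z.2.1]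

/-- `ω̄₃ = dz̄₃ − z̄₂ dz̄₁` evaluated on `∂̄_k`. -/
noncomputable def w3bar : Fin 3 → C3 → ℂ :=
  ![fun z => -(starRingEnd ℂ) z.2.1, fun _ => 0, fun _ => 1]

/-- `∂ω(g⁻¹dz̄_i, g⁻¹dz̄_j, ∂̄_k)` for `∂ω = (i/2) ω₁∧ω₂∧ω̄₃`. -/
noncomputable def delOmegaIw (i j k : Fin 3) : C3 → ℂ := fun z =>
  (Complex.I / 2) * (w1 i z * w2 j z - w1 j z * w2 i z) * w3bar k z

/-- The torsion bivector field components
`(σ_ω)_{ī j̄} = i Σ_k g⁻¹dz̄_k( ∂ω(g⁻¹dz̄_i, g⁻¹dz̄_j, ∂̄_k) )`. -/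
noncomputable def sigmaIwasawa (i j : Fin 3) (z : C3) : ℂ :=
  Complex.I * ∑ k : Fin 3, Vact k (delOmegaIw i j k) z

/-! The vector fields `g⁻¹dz̄_k` are of type `(1,0)`: combinations of the Wirtinger derivatives
`∂/∂z_k`, which annihilate every function whose real derivative is conjugate-linear. The
components of `∂ω` on `(g⁻¹dz̄_i, g⁻¹dz̄_j, ∂̄_k)` are polynomials in `z̄₂` alone, hence
antiholomorphic, so every term of `σ_ω` vanishes. -/

open ComplexConjugate

section Wirtinger

variable {f : C3 → ℂ} {z : C3}

theorem wirtinger_eq_zero_of_fderiv_I_smul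
    (hf : ∀ v, fderiv ℝ f z (I • v) = -(I * fderiv ℝ f z v)) (e : C3) :
    1 / 2 * (fderiv ℝ f z e - I * fderiv ℝ f z (I • e)) = 0 := by
  linear_combination (-(1 / 2) * I) * hf e + (1 / 2 * fderiv ℝ f z e) * I_sq

theorem Vact_eq_zero_of_fderiv_I_smul (k : Fin 3)
    (hf : ∀ v, fderiv ℝ f z (I • v) = -(I * fderiv ℝ f z v)) : Vact k f z = 0 := by
  have h₁ : pd1 f z = 0 := by simpa [pd1] using wirtinger_eq_zero_of_fderiv_I_smul hf (1, 0, 0)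
  have h₂ : pd2 f z = 0 := by simpa [pd2] using wirtinger_eq_zero_of_fderiv_I_smul hf (0, 1, 0)
  have h₃ : pd3 f z = 0 := by simpa [pd3] using wirtinger_eq_zero_of_fderiv_I_smul hf (0, 0, 1)
  fin_cases k <;> simp [Vact, h₁, h₂, h₃]

end Wirtinger

noncomputable def conjZ2 : C3 →L[ℝ] ℂ :=
  conjCLE.toContinuousLinearMap ∘L
    ContinuousLinearMap.fst ℝ ℂ ℂ ∘L ContinuousLinearMap.snd ℝ ℂ (ℂ × ℂ)

@[simp] theorem conjZ2_apply (z : C3) : conjZ2 z = conj z.2.1 := rfl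

theorem fderiv_comp_conjZ2_I_smul {g : ℂ → ℂ} {z : C3}
    (hg : DifferentiableAt ℂ g (conj z.2.1)) (v : C3) :
    fderiv ℝ (fun z => g (conjZ2 z)) z (I • v) = -(I * fderiv ℝ (fun z => g (conjZ2 z)) z v) := by
  have hfd : HasFDerivAt (fun z => g (conjZ2 z))
      ((fderiv ℂ g (conj z.2.1)).restrictScalars ℝ ∘L conjZ2) z :=
    (hg.hasFDerivAt.restrictScalars ℝ).comp z conjZ2.hasFDerivAt
  rw [hfd.fderiv]
  simp only [ContinuousLinearMap.comp_apply, ContinuousLinearMap.coe_restrictScalars', conjZ2_apply,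
    Prod.smul_fst, Prod.smul_snd, smul_eq_mul, map_mul, conj_I]
  simpa using (fderiv ℂ g (conj z.2.1)).map_smul (-I) (conj v.2.1)

def IsHolomorphicInConjZ2 (f : C3 → ℂ) : Prop :=
  ∃ g : ℂ → ℂ, Differentiable ℂ g ∧ f = fun z => g (conjZ2 z)

namespace IsHolomorphicInConjZ2

theorem const (a : ℂ) : IsHolomorphicInConjZ2 fun _ => a :=
  ⟨fun _ => a, differentiable_const a, rfl⟩

theorem conj_snd_fst : IsHolomorphicInConjZ2 fun z => conj z.2.1 :=
  ⟨id, differentiable_id, rfl⟩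

variable {f₁ f₂ : C3 → ℂ}

theorem mul (h₁ : IsHolomorphicInConjZ2 f₁) (h₂ : IsHolomorphicInConjZ2 f₂) :
    IsHolomorphicInConjZ2 fun z => f₁ z * f₂ z := by
  obtain ⟨g₁, hg₁, rfl⟩ := h₁
  obtain ⟨g₂, hg₂, rfl⟩ := h₂
  exact ⟨fun w => g₁ w * g₂ w, hg₁.mul hg₂, rfl⟩

theorem sub (h₁ : IsHolomorphicInConjZ2 f₁) (h₂ : IsHolomorphicInConjZ2 f₂) :
    IsHolomorphicInConjZ2 fun z => f₁ z - f₂ z := by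
  obtain ⟨g₁, hg₁, rfl⟩ := h₁
  obtain ⟨g₂, hg₂, rfl⟩ := h₂
  exact ⟨fun w => g₁ w - g₂ w, hg₁.sub hg₂, rfl⟩

theorem neg (h₁ : IsHolomorphicInConjZ2 f₁) : IsHolomorphicInConjZ2 fun z => -f₁ z := by
  obtain ⟨g₁, hg₁, rfl⟩ := h₁
  exact ⟨fun w => -g₁ w, hg₁.neg, rfl⟩

theorem Vact_eq_zero {f : C3 → ℂ} (hf : IsHolomorphicInConjZ2 f) (k : Fin 3) (z : C3) :
    Vact k f z = 0 := by
  obtain ⟨g, hg, rfl⟩ := hf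
  exact Vact_eq_zero_of_fderiv_I_smul k (fderiv_comp_conjZ2_I_smul (hg _))

end IsHolomorphicInConjZ2

open IsHolomorphicInConjZ2

theorem isHolomorphicInConjZ2_w1 (i : Fin 3) : IsHolomorphicInConjZ2 (w1 i) := by
  fin_cases i <;> exact const _

theorem isHolomorphicInConjZ2_w2 (i : Fin 3) : IsHolomorphicInConjZ2 (w2 i) := by
  fin_cases i
  · exact const 0
  · exact const 2
  · exact (const 2).mul conj_snd_fst

theorem isHolomorphicInConjZ2_w3bar (k : Fin 3) : IsHolomorphicInConjZ2 (w3bar k) := by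
  fin_cases k
  · exact conj_snd_fst.neg
  · exact const 0
  · exact const 1

theorem isHolomorphicInConjZ2_delOmegaIw (i j k : Fin 3) :
    IsHolomorphicInConjZ2 (delOmegaIw i j k) :=
  ((const _).mul (((isHolomorphicInConjZ2_w1 i).mul (isHolomorphicInConjZ2_w2 j)).sub
    ((isHolomorphicInConjZ2_w1 j).mul (isHolomorphicInConjZ2_w2 i)))).mul
    (isHolomorphicInConjZ2_w3bar k)

/-- The torsion bivector field of the balanced Iwasawa metric vanishes. -/
theorem iwasawa_torsion_bivector_vanishes :
    ∀ (i j : Fin 3) (z : C3), sigmaIwasawa i j z = 0 := by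
  intro i j z
  simp [sigmaIwasawa, (isHolomorphicInConjZ2_delOmegaIw i j _).Vact_eq_zero]
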